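/- Let L_n ⊆ S_n be a zigzag language and let π, ρ, σ be three consecutive permutations in J(L_n). If ρ is obtained from π by a jump of the value n and σ is obtained from ρ by a jump of a value j < n, then s_{n,i}^ρ = s_{n,i}^π for all i ∈ {1,…,n−2} and s_{n,n−1}^ρ = n−1. -/

import Mathlib

/-!
Shared definitions: permutations in one-line notation as lists of naturals,
deletion `p`, insertion `c_i`, zigzag languages, the Gray code sequence `J(L_n)`,
jumps, minimal jumps, the auxiliary sequences `s_n^π`, Algorithm M,
vincular pattern containment and 2-clumped permutations.
-/

/-- `S_n`: permutations of `{1,…,n}` in one-line notation, as lists of naturals. -/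
def SymmList (n : ℕ) : Set (List ℕ) := {l | List.Perm l (List.range' 1 n)}

/-- The identity permutation `id_n = 1 2 ⋯ n`. -/
def idPerm (n : ℕ) : List ℕ := List.range' 1 n

/-- `p(π)`: delete the largest entry `n = π.length` from the permutation `π ∈ S_n`. -/
def pdel (l : List ℕ) : List ℕ := l.erase l.length

/-- `c_i(π)`: insert the new largest value `π.length + 1` at (1-indexed) position `i`. -/
def cins (i : ℕ) (l : List ℕ) : List ℕ :=
  l.take (i - 1) ++ (l.length + 1) :: l.drop (i - 1)

/-- Zigzag languages of permutations: `L_0 = {ε}` is a zigzag language, and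
`L ⊆ S_{n+1}` is a zigzag language if `p(L)` is a zigzag language and
`c_1(π), c_{n+1}(π) ∈ L` for every `π ∈ p(L)`. -/
inductive IsZigzag : ℕ → Set (List ℕ) → Prop
  | zero : IsZigzag 0 {[]}
  | succ (n : ℕ) (L : Set (List ℕ)) :
      L ⊆ SymmList (n + 1) →
      IsZigzag n (pdel '' L) →
      (∀ l ∈ pdel '' L, cins 1 l ∈ L ∧ cins (n + 1) l ∈ L) →
      IsZigzag (n + 1) L

/-- `→c(π)`: the sequence of those `c_1(π),…,c_n(π)` lying in `L`,
in increasing order of the insertion position. -/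
noncomputable def cSeq (L : Set (List ℕ)) (n : ℕ) (l : List ℕ) : List (List ℕ) :=
  ((List.range' 1 n).map (fun i => cins i l)).filter
    (fun x => @decide (x ∈ L) (Classical.propDecidable _))

/-- The Gray code sequence `J(L_n)` of a language `L ⊆ S_n`:
`J(L_0) = ε`, and `J(L_{n+1})` is obtained from `J(L_n)` (for the language
`p(L)`) by replacing its entries alternately by `←c(π)` (the reverse of
`→c(π)`) and `→c(π)`. -/
noncomputable def Jseq : ℕ → Set (List ℕ) → List (List ℕ)
  | 0, _ => [[]]
  | (n + 1), L =>
      (((Jseq n (pdel '' L)).mapIdx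
        (fun k π => if k % 2 = 0 then (cSeq L (n + 1) π).reverse
                    else cSeq L (n + 1) π)).flatten)

/-- `ρ` is obtained from `π` by a right jump of the value `v` by `d` steps. -/
def RightJump (π ρ : List ℕ) (v d : ℕ) : Prop :=
  0 < d ∧ ∃ A B C : List ℕ, B.length = d ∧ (∀ x ∈ B, x < v) ∧
    π = A ++ v :: (B ++ C) ∧ ρ = A ++ (B ++ v :: C)

/-- `ρ` is obtained from `π` by a left jump of the value `v` by `d` steps. -/
def LeftJump (π ρ : List ℕ) (v d : ℕ) : Prop := RightJump ρ π v d

/-- A right jump that is minimal with respect to `L`: every right jump of the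
same value by fewer steps yields a permutation not in `L`. -/
def MinimalRightJump (L : Set (List ℕ)) (π ρ : List ℕ) (v d : ℕ) : Prop :=
  RightJump π ρ v d ∧ ∀ d' ρ', d' < d → RightJump π ρ' v d' → ρ' ∉ L

/-- A left jump that is minimal with respect to `L`. -/
def MinimalLeftJump (L : Set (List ℕ)) (π ρ : List ℕ) (v d : ℕ) : Prop :=
  LeftJump π ρ v d ∧ ∀ d' ρ', d' < d → LeftJump π ρ' v d' → ρ' ∉ L

/-- The auxiliary sequence `s_n^π` of a permutation `π` occurring in `J(L_n)`,
as a function of the index `i ∈ {1,…,n}` (value `0` outside this range). -/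
noncomputable def sVec : ℕ → Set (List ℕ) → List ℕ → ℕ → ℕ
  | 0, _, _, _ => 0
  | 1, _, _, i => if i = 1 then 1 else 0
  | (n + 2), L, π, i =>
      let L' := pdel '' L
      let π' := pdel π
      let cbar := if ((Jseq (n + 1) L').idxOf π') % 2 = 0
                  then (cSeq L (n + 2) π').reverse else cSeq L (n + 2) π'
      if cbar.getLast? = some π then
        (if i ≤ n then sVec (n + 1) L' π' i
         else if i = n + 1 then n + 1
         else if i = n + 2 then sVec (n + 1) L' π' (n + 1) else 0)
      else
        (if i ≤ n + 1 then sVec (n + 1) L' π' i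
         else if i = n + 2 then n + 2 else 0)

/-- `j` is at the first position of `l`, or the entry immediately left of `j`
in `l` is larger than `j`. -/
def AtLeftTurn (l : List ℕ) (j : ℕ) : Prop :=
  ∃ A B : List ℕ, l = A ++ j :: B ∧ (A = [] ∨ ∃ x, A.getLast? = some x ∧ j < x)

/-- `j` is at the last position of `l`, or the entry immediately right of `j`
in `l` is larger than `j`. -/
def AtRightTurn (l : List ℕ) (j : ℕ) : Prop :=
  ∃ A B : List ℕ, l = A ++ j :: B ∧ (B = [] ∨ ∃ x, B.head? = some x ∧ j < x)

/-- `j` is not at the first position of `l`, and the entry immediately left of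
`j` in `l` is smaller than `j`. -/
def SmallerLeftNeighbor (l : List ℕ) (j : ℕ) : Prop :=
  ∃ A B : List ℕ, ∃ x, l = A ++ j :: B ∧ A.getLast? = some x ∧ x < j

/-- `j` is not at the last position of `l`, and the entry immediately right of
`j` in `l` is smaller than `j`. -/
def SmallerRightNeighbor (l : List ℕ) (j : ℕ) : Prop :=
  ∃ A B : List ℕ, ∃ x, l = A ++ j :: B ∧ B.head? = some x ∧ x < j

/-- A state of Algorithm M: the current permutation `π` and the auxiliary
arrays `o` and `s`; `o j = false` encodes direction `L` (left) and
`o j = true` encodes `R` (right). -/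
structure MState where
  perm : List ℕ
  o : ℕ → Bool
  s : ℕ → ℕ

/-- The initial state of Algorithm M (step M1): `π = id_n`, `o_j = L`, `s_j = j`. -/
def MInit (n : ℕ) : MState := ⟨idPerm n, fun _ => false, fun j => j⟩

/-- One iteration (steps M3–M5) of Algorithm M on a language `L ⊆ S_n`:
with `j := s_n ≠ 1`, the permutation jumps minimally in the direction `o_j`
(step M4), and the arrays `o`, `s` are updated as in step M5. -/
def MStep (L : Set (List ℕ)) (n : ℕ) (σ σ' : MState) : Prop :=
  σ.s n ≠ 1 ∧
  σ'.perm ∈ L ∧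
  ((σ.o (σ.s n) = false ∧ ∃ d, MinimalLeftJump L σ.perm σ'.perm (σ.s n) d) ∨
   (σ.o (σ.s n) = true ∧ ∃ d, MinimalRightJump L σ.perm σ'.perm (σ.s n) d)) ∧
  (((σ.o (σ.s n) = false ∧ AtLeftTurn σ'.perm (σ.s n)) ∨
    (σ.o (σ.s n) = true ∧ AtRightTurn σ'.perm (σ.s n))) →
      σ'.o = Function.update σ.o (σ.s n) (!σ.o (σ.s n)) ∧
      σ'.s = Function.update (Function.update (Function.update σ.s n n) (σ.s n)
               ((Function.update σ.s n n) (σ.s n - 1))) (σ.s n - 1) (σ.s n - 1)) ∧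
  (¬ ((σ.o (σ.s n) = false ∧ AtLeftTurn σ'.perm (σ.s n)) ∨
      (σ.o (σ.s n) = true ∧ AtRightTurn σ'.perm (σ.s n))) →
      σ'.o = σ.o ∧ σ'.s = Function.update σ.s n n)

/-- `π` contains the vincular pattern `pat` whose marked adjacent pair starts
at (0-indexed) position `k` of `pat`. -/
def ContainsVincular (π pat : List ℕ) (k : ℕ) : Prop :=
  ∃ f : ℕ → ℕ, StrictMonoOn f (Set.Iio pat.length) ∧
    (∀ i < pat.length, f i < π.length) ∧
    f (k + 1) = f k + 1 ∧
    (∀ i < pat.length, ∀ j < pat.length,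
      (pat.getD i 0 < pat.getD j 0 ↔ π.getD (f i) 0 < π.getD (f j) 0))

/-- 2-clumped permutations: those avoiding the vincular patterns
`3(51)24`, `3(51)42`, `24(51)3` and `42(51)3`. -/
def TwoClumped (π : List ℕ) : Prop :=
  ¬ ContainsVincular π [3, 5, 1, 2, 4] 1 ∧ ¬ ContainsVincular π [3, 5, 1, 4, 2] 1 ∧
  ¬ ContainsVincular π [2, 4, 5, 1, 3] 2 ∧ ¬ ContainsVincular π [4, 2, 5, 1, 3] 2

/-- `S'_n`: the set of 2-clumped permutations in `S_n`. -/
def SClump (n : ℕ) : Set (List ℕ) := {l ∈ SymmList n | TwoClumped l}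

/-- `B_n`: the permutations obtained from `1` by repeatedly inserting the new
largest value at the first or the last position. -/
def Bset : ℕ → Set (List ℕ)
  | 0 => {[]}
  | 1 => {[1]}
  | (n + 2) => {l | ∃ π ∈ Bset (n + 1), l = cins 1 π ∨ l = cins (n + 2) π}

/-!
Since `ρ` arises from `π` by a jump of `n`, both have the same parent `p(π) = p(ρ)`, and
`π ≠ ρ`. Since `σ` arises from `ρ` by a jump of a smaller value, `p(σ) ≠ p(ρ)`. As `J(L_n)`
lists the children of each parent of `J(L_{n-1})` as one contiguous block `c̄`, the
permutation `ρ` is the last one of its block and `π` is not, so the recursion for `s` gives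
`s^ρ = (s'_1, …, s'_{n-2}, n-1, s'_{n-1})` and `s^π = (s'_1, …, s'_{n-1}, n)` with
`s' = s^{p(ρ)}`.
-/

namespace List

variable {α β : Type*}

theorem exists_getLast?_eq_of_getElem?_flatten {bs : List (List α)} {k : ℕ} {a b : α}
    (ha : bs.flatten[k]? = some a) (hb : bs.flatten[k + 1]? = some b)
    (hab : ∀ blk ∈ bs, a ∈ blk → b ∉ blk) :
    ∃ blk ∈ bs, blk.getLast? = some a := by
  induction bs generalizing k with
  | nil => simp at ha
  | cons blk bs ih =>
    rw [flatten_cons] at ha hb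
    by_cases hk : k < blk.length
    · rw [getElem?_append_left hk] at ha
      have ha_mem : a ∈ blk := mem_of_getElem? ha
      refine ⟨blk, mem_cons_self, ?_⟩
      by_cases hk' : k + 1 < blk.length
      · rw [getElem?_append_left hk'] at hb
        exact absurd (mem_of_getElem? hb) (hab blk mem_cons_self ha_mem)
      · rwa [getLast?_eq_getElem?, show blk.length - 1 = k by omega]
    · rw [getElem?_append_right (by omega)] at ha
      rw [getElem?_append_right (by omega), show k + 1 - blk.length = k - blk.length + 1 by omega]
        at hb
      obtain ⟨c, hc, hlast⟩ := ih ha hb fun c hc => hab c (mem_cons_of_mem _ hc)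
      exact ⟨c, mem_cons_of_mem _ hc, hlast⟩

variable {ps : List α} {f : ℕ → α → List β} {g : β → α}

theorem nodup_flatten_mapIdx (hps : ps.Nodup) (hg : ∀ i, ∀ p ∈ ps, ∀ x ∈ f i p, g x = p)
    (hf : ∀ i, ∀ p ∈ ps, (f i p).Nodup) : (ps.mapIdx f).flatten.Nodup := by
  rw [nodup_flatten, pairwise_iff_getElem]
  refine ⟨fun blk hblk => ?_, fun i i' hi hi' hii' x hx hx' => ?_⟩
  · obtain ⟨i, hi, rfl⟩ := mem_mapIdx.1 hblk
    exact hf i _ (getElem_mem hi)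
  · rw [length_mapIdx] at hi hi'
    rw [getElem_mapIdx] at hx hx'
    have := hps.getElem_inj_iff.1 <|
      (hg i _ (getElem_mem hi) x hx).symm.trans (hg i' _ (getElem_mem hi') x hx')
    omega

theorem getLast?_idxOf_of_getElem?_flatten_mapIdx [BEq α] [LawfulBEq α] (hps : ps.Nodup)
    (hg : ∀ i, ∀ p ∈ ps, ∀ x ∈ f i p, g x = p) {k : ℕ} {a b : β}
    (ha : (ps.mapIdx f).flatten[k]? = some a) (hb : (ps.mapIdx f).flatten[k + 1]? = some b)
    (hab : g b ≠ g a) : (f (ps.idxOf (g a)) (g a)).getLast? = some a := by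
  have hfib : ∀ blk ∈ ps.mapIdx f, ∀ x ∈ blk, ∃ i, ∃ hi : i < ps.length,
      blk = f i ps[i] ∧ g x = ps[i] := by
    intro blk hblk x hx
    obtain ⟨i, hi, rfl⟩ := mem_mapIdx.1 hblk
    exact ⟨i, hi, rfl, hg i _ (getElem_mem hi) x hx⟩
  obtain ⟨blk, hblk, hlast⟩ := exists_getLast?_eq_of_getElem?_flatten ha hb
    fun blk hblk ha hb => by
      obtain ⟨i, hi, rfl, hga⟩ := hfib blk hblk a ha
      exact hab ((hg i _ (getElem_mem hi) b hb).trans hga.symm)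
  obtain ⟨i, hi, rfl, hga⟩ := hfib blk hblk a (mem_of_getLast? hlast)
  rwa [hga, hps.idxOf_getElem]

end List

namespace SymmList

variable {n : ℕ} {l : List ℕ}

theorem length_eq (h : l ∈ SymmList n) : l.length = n := by
  simpa using List.Perm.length_eq h

theorem nodup (h : l ∈ SymmList n) : l.Nodup :=
  h.nodup_iff.2 (List.nodup_range' 1)

theorem length_add_one_not_mem (h : l ∈ SymmList n) : l.length + 1 ∉ l := by
  rw [h.mem_iff, List.mem_range'_1, length_eq h]
  omega

end SymmList

section Insertion

variable {l : List ℕ}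

theorem pdel_cins (h : l.length + 1 ∉ l) (i : ℕ) : pdel (cins i l) = l := by
  have htake : l.length + 1 ∉ l.take (i - 1) := fun hm => h (List.take_subset _ _ hm)
  rw [pdel, cins, List.length_append, List.length_cons, List.length_take, List.length_drop,
    show min (i - 1) l.length + (l.length - (i - 1) + 1) = l.length + 1 by omega,
    List.erase_append_right _ htake, List.erase_cons_head, List.take_append_drop]

theorem idxOf_cins (h : l.length + 1 ∉ l) {i : ℕ} (hi : i ≤ l.length + 1) :
    (cins i l).idxOf (l.length + 1) = i - 1 := by
  have htake : l.length + 1 ∉ l.take (i - 1) := fun hm => h (List.take_subset _ _ hm)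
  rw [cins, List.idxOf_append, if_neg htake, List.idxOf_cons_self, List.length_take]
  omega

theorem nodup_cSeq (L : Set (List ℕ)) (h : l.length + 1 ∉ l) {N : ℕ} (hN : N ≤ l.length + 1) :
    (cSeq L N l).Nodup := by
  refine ((List.nodup_range' 1).map_on fun i hi i' hi' hii' => ?_).filter _
  rw [List.mem_range'_1] at hi hi'
  have := congrArg (List.idxOf (l.length + 1)) hii'
  rw [idxOf_cins h (by omega), idxOf_cins h (by omega)] at this
  omega

theorem mem_cSeq {L : Set (List ℕ)} {N : ℕ} {x : List ℕ} (hx : x ∈ cSeq L N l) :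
    x ∈ L ∧ ∃ i, x = cins i l := by
  obtain ⟨hmem, hL⟩ := List.mem_filter.1 hx
  obtain ⟨i, -, rfl⟩ := List.mem_map.1 hmem
  exact ⟨by simpa using hL, i, rfl⟩

end Insertion

/-- The block `←c(p)` or `→c(p)` that replaces the `k`-th entry `p` of `J(L_{n-1})`. -/
noncomputable def zigBlock (L : Set (List ℕ)) (n k : ℕ) (p : List ℕ) : List (List ℕ) :=
  if k % 2 = 0 then (cSeq L n p).reverse else cSeq L n p

/-- The block `c̄(p)` of the children of `p ∈ J(L_n)` in `J(L_{n+1})`. -/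
noncomputable def childBlock (L : Set (List ℕ)) (n : ℕ) (p : List ℕ) : List (List ℕ) :=
  zigBlock L (n + 1) ((Jseq n (pdel '' L)).idxOf p) p

theorem Jseq_succ (n : ℕ) (L : Set (List ℕ)) :
    Jseq (n + 1) L = ((Jseq n (pdel '' L)).mapIdx (zigBlock L (n + 1))).flatten :=
  rfl

theorem mem_zigBlock_iff {L : Set (List ℕ)} {n k : ℕ} {p x : List ℕ} :
    x ∈ zigBlock L n k p ↔ x ∈ cSeq L n p := by
  unfold zigBlock
  split_ifs <;> simp

theorem nodup_zigBlock_iff {L : Set (List ℕ)} {n k : ℕ} {p : List ℕ} :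
    (zigBlock L n k p).Nodup ↔ (cSeq L n p).Nodup := by
  unfold zigBlock
  split_ifs <;> simp

namespace IsZigzag

variable {n : ℕ} {L : Set (List ℕ)}

theorem subset_symmList (hL : IsZigzag n L) : L ⊆ SymmList n := by
  cases hL with
  | zero => rintro x rfl; exact List.Perm.refl _
  | succ n L hsub _ _ => exact hsub

theorem pdel_image (hL : IsZigzag (n + 1) L) : IsZigzag n (pdel '' L) := by
  cases hL with
  | succ n L _ hz _ => exact hz

theorem mem_of_mem_Jseq (hL : IsZigzag n L) {x : List ℕ} (hx : x ∈ Jseq n L) : x ∈ L := by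
  cases n with
  | zero =>
    cases hL
    simpa [Jseq] using hx
  | succ n =>
    rw [Jseq_succ] at hx
    obtain ⟨blk, hblk, hx⟩ := List.mem_flatten.1 hx
    obtain ⟨i, _, rfl⟩ := List.mem_mapIdx.1 hblk
    exact (mem_cSeq (mem_zigBlock_iff.1 hx)).1

theorem pdel_of_mem_zigBlock (hL : IsZigzag (n + 1) L) {i : ℕ} {p x : List ℕ}
    (hp : p ∈ Jseq n (pdel '' L)) (hx : x ∈ zigBlock L (n + 1) i p) : pdel x = p := by
  have hpS := hL.pdel_image.subset_symmList (hL.pdel_image.mem_of_mem_Jseq hp)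
  obtain ⟨-, i, rfl⟩ := mem_cSeq (mem_zigBlock_iff.1 hx)
  exact pdel_cins (SymmList.length_add_one_not_mem hpS) i

theorem nodup_Jseq (hL : IsZigzag n L) : (Jseq n L).Nodup := by
  induction hL with
  | zero => simp [Jseq]
  | succ n L hsub hz hcl ih =>
    have hL : IsZigzag (n + 1) L := .succ n L hsub hz hcl
    refine List.nodup_flatten_mapIdx ih (fun i p hp x hx => hL.pdel_of_mem_zigBlock hp hx)
      fun i p hp => nodup_zigBlock_iff.2 ?_
    have hpS := hz.subset_symmList (hz.mem_of_mem_Jseq hp)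
    exact nodup_cSeq L (SymmList.length_add_one_not_mem hpS) (by rw [SymmList.length_eq hpS])

theorem getLast?_childBlock (hL : IsZigzag (n + 1) L) {k : ℕ} {ρ σ : List ℕ}
    (hρ : (Jseq (n + 1) L)[k]? = some ρ) (hσ : (Jseq (n + 1) L)[k + 1]? = some σ)
    (hne : pdel σ ≠ pdel ρ) : (childBlock L n (pdel ρ)).getLast? = some ρ :=
  List.getLast?_idxOf_of_getElem?_flatten_mapIdx (f := zigBlock L (n + 1))
    hL.pdel_image.nodup_Jseq
    (fun _ _ hp _ hx => hL.pdel_of_mem_zigBlock hp hx) hρ hσ hne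

end IsZigzag

namespace RightJump

variable {α β : List ℕ} {v d : ℕ}

theorem perm (h : RightJump α β v d) : α.Perm β := by
  obtain ⟨-, A, B, C, -, -, rfl, rfl⟩ := h
  exact List.perm_middle.symm.append_left A

theorem ne (h : RightJump α β v d) : α ≠ β := by
  obtain ⟨hd, A, B, C, hB, hlt, rfl, rfl⟩ := h
  intro heq
  cases B with
  | nil => simp only [List.length_nil] at hB; omega
  | cons b B =>
    have := List.append_cancel_left heq
    simp only [List.cons_append, List.cons.injEq] at this
    exact (hlt b List.mem_cons_self).ne this.1.symm

theorem erase_self (h : RightJump α β v d) (hα : α.Nodup) : α.erase v = β.erase v := by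
  obtain ⟨-, A, B, C, -, hlt, rfl, rfl⟩ := h
  have hvA : v ∉ A := fun hv => (List.nodup_append.1 hα).2.2 v hv v List.mem_cons_self rfl
  have hvB : v ∉ B := fun hv => (hlt v hv).false
  rw [List.erase_append_right _ hvA, List.erase_append_right _ hvA, List.erase_cons_head,
    List.erase_append_right _ hvB, List.erase_cons_head]

theorem erase {w : ℕ} (h : RightJump α β v d) (hw : v < w) :
    RightJump (α.erase w) (β.erase w) v d := by
  obtain ⟨hd, A, B, C, hB, hlt, rfl, rfl⟩ := h
  have hwB : w ∉ B := fun hm => (hlt w hm).not_gt hw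
  refine ⟨hd, ?_⟩
  by_cases hwA : w ∈ A
  · exact ⟨A.erase w, B, C, hB, hlt, List.erase_append_left _ hwA,
      List.erase_append_left _ hwA⟩
  · refine ⟨A, B, C.erase w, hB, hlt, ?_, ?_⟩
    · rw [List.erase_append_right _ hwA, List.erase_cons_tail (by simpa using hw.ne),
        List.erase_append_right _ hwB]
    · rw [List.erase_append_right _ hwA, List.erase_append_right _ hwB,
        List.erase_cons_tail (by simpa using hw.ne)]

end RightJump

def Jump (α β : List ℕ) (v : ℕ) : Prop := ∃ d, LeftJump α β v d ∨ RightJump α β v d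

namespace Jump

variable {α β : List ℕ} {v : ℕ}

theorem perm (h : Jump α β v) : α.Perm β := by
  obtain ⟨d, h | h⟩ := h
  · exact (RightJump.perm h).symm
  · exact h.perm

theorem ne (h : Jump α β v) : α ≠ β := by
  obtain ⟨d, h | h⟩ := h
  · exact (RightJump.ne h).symm
  · exact h.ne

theorem pdel_eq (h : Jump α β β.length) (hβ : β.Nodup) : pdel α = pdel β := by
  rw [pdel, pdel, h.perm.length_eq]
  obtain ⟨d, h | h⟩ := h
  · exact (RightJump.erase_self h hβ).symm
  · exact h.erase_self (h.perm.nodup_iff.2 hβ)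

theorem pdel_ne (h : Jump α β v) (hv : v < α.length) : pdel α ≠ pdel β := by
  rw [pdel, pdel, ← h.perm.length_eq]
  obtain ⟨d, h | h⟩ := h
  · exact (RightJump.erase h hv).ne.symm
  · exact (h.erase hv).ne

end Jump

section sVec

variable {L : Set (List ℕ)} {n : ℕ} {π : List ℕ}

theorem sVec_of_getLast (h : (childBlock L (n + 1) (pdel π)).getLast? = some π) :
    (∀ i ≤ n, sVec (n + 2) L π i = sVec (n + 1) (pdel '' L) (pdel π) i) ∧
      sVec (n + 2) L π (n + 1) = n + 1 := by
  have hunfold : ∀ i, sVec (n + 2) L π i =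
      if i ≤ n then sVec (n + 1) (pdel '' L) (pdel π) i
      else if i = n + 1 then n + 1
      else if i = n + 2 then sVec (n + 1) (pdel '' L) (pdel π) (n + 1) else 0 :=
    fun _ => (if_pos h : _ = _)
  exact ⟨fun i hi => by rw [hunfold, if_pos hi], by rw [hunfold, if_neg (by omega), if_pos rfl]⟩

theorem sVec_of_not_getLast (h : (childBlock L (n + 1) (pdel π)).getLast? ≠ some π) {i : ℕ}
    (hi : i ≤ n + 1) : sVec (n + 2) L π i = sVec (n + 1) (pdel '' L) (pdel π) i := by
  have hunfold : sVec (n + 2) L π i =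
      if i ≤ n + 1 then sVec (n + 1) (pdel '' L) (pdel π) i
      else if i = n + 2 then n + 2 else 0 :=
    (if_neg h : _ = _)
  rw [hunfold, if_pos hi]

end sVec

theorem sVec_update_nj_general (n : ℕ) (L : Set (List ℕ)) (hL : IsZigzag n L)
    (k : ℕ) (π ρ σ : List ℕ)
    (hρ : (Jseq n L)[k + 1]? = some ρ)
    (hσ : (Jseq n L)[k + 2]? = some σ)
    (h1 : ∃ d, LeftJump π ρ n d ∨ RightJump π ρ n d)
    (j : ℕ) (hj : j < n)
    (h2 : ∃ d, LeftJump ρ σ j d ∨ RightJump ρ σ j d) :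
    (∀ i, 1 ≤ i → i ≤ n - 2 → sVec n L ρ i = sVec n L π i) ∧
    sVec n L ρ (n - 1) = n - 1 := by
  obtain hn | ⟨m, rfl⟩ : n ≤ 1 ∨ ∃ m, n = m + 2 := by rcases n with _ | _ | m <;> simp
  · interval_cases n <;> simp [sVec]
  have hρS : ρ ∈ SymmList (m + 2) :=
    hL.subset_symmList (hL.mem_of_mem_Jseq (List.mem_of_getElem? hρ))
  have hlen := SymmList.length_eq hρS
  have hpar : pdel π = pdel ρ := Jump.pdel_eq (hlen ▸ h1) (SymmList.nodup hρS)
  have hρ_last := hL.getLast?_childBlock hρ hσ (Jump.pdel_ne h2 (by omega)).symm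
  have hπ_not_last : (childBlock L (m + 1) (pdel π)).getLast? ≠ some π := by
    rw [hpar, hρ_last]
    exact fun h => Jump.ne h1 (Option.some_inj.1 h).symm
  obtain ⟨hρ_low, hρ_top⟩ := sVec_of_getLast hρ_last
  refine ⟨fun i _ hi => ?_, hρ_top⟩
  rw [hρ_low i (by omega), sVec_of_not_getLast hπ_not_last (by omega), hpar]

/-- Let `L_n ⊆ S_n` be a zigzag language and let `π, ρ, σ` be
three consecutive permutations in `J(L_n)`. If `ρ` is obtained from `π` by a
jump of the value `n` and `σ` is obtained from `ρ` by a jump of a value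
`j < n`, then `s_{n,i}^ρ = s_{n,i}^π` for all `i ∈ {1,…,n−2}` and
`s_{n,n−1}^ρ = n−1`. -/
theorem sVec_update_nj (n : ℕ) (L : Set (List ℕ)) (hL : IsZigzag n L)
    (k : ℕ) (π ρ σ : List ℕ)
    (hπ : (Jseq n L)[k]? = some π) (hρ : (Jseq n L)[k + 1]? = some ρ)
    (hσ : (Jseq n L)[k + 2]? = some σ)
    (h1 : ∃ d, LeftJump π ρ n d ∨ RightJump π ρ n d)
    (j : ℕ) (hj : j < n)
    (h2 : ∃ d, LeftJump ρ σ j d ∨ RightJump ρ σ j d) :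
    (∀ i, 1 ≤ i → i ≤ n - 2 → sVec n L ρ i = sVec n L π i) ∧
    sVec n L ρ (n - 1) = n - 1 :=
  sVec_update_nj_general n L hL k π ρ σ hρ hσ h1 j hj h2
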